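/- For every integer s ≥ 0 and every g ∈ B, one has (L_s − 𝓛_s)(e^φ·g) = h_s·e^φ·g + ∑_{k=0}^{s} λ_k·e^φ·a_{s−k}(g) + e^φ·(L_s − 𝓛_s)(g), where 𝓛_s := h_s + D_s. Equivalently, the commutator satisfies [L_s − 𝓛_s, Φ] = h_s·Φ + ∑_{k=0}^{s} λ_k·Φ∘a_{s−k}, where Φ denotes multiplication by e^φ. -/

import Mathlib

/-!
STATEMENT 11.
Fix r ≥ 1 and ρ ∈ ℂ.  A := ℂ[x_1,x_2,…] (= `MvPolynomial ℕ ℂ`, variable `i`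
is x_{i+1}), B := A[[λ_1,…,λ_r]] (= `MvPowerSeries (Fin r) A`, variable
`n : Fin r` is λ_{n+1}).  For p ≥ 1, a_{−p} is multiplication by x_p and
a_p := p·∂/∂x_p (a_0 := 0), extended coefficientwise to B.
φ := ∑_{j=1}^r λ_j x_j/j and e^φ := ∑ φ^m/m! (computed by `expB`, exact on
series of positive λ-order).  For s ≥ 0,
  L_s := (1/2)·∑_{k=0}^{s} a_k·a_{s−k} + ∑_{p≥1} a_{−p}·a_{s+p} − ρ(s+1)·a_s
(the sum over p is locally finite; realized by `finsum`).  With λ_0 := 0,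
λ_ℓ := 0 for ℓ > r, h_s := (1/2)∑_{j=0}^{s} λ_j λ_{s−j} − ρ(s+1)λ_s and
D_s := ∑_{j=1}^{r−s} j·λ_{j+s}·∂/∂λ_j (coefficientwise in x), the claim is:
for every s ≥ 0 and g ∈ B,
  (L_s − 𝓛_s)(e^φ·g) = h_s·e^φ·g + ∑_{k=0}^{s} λ_k·e^φ·a_{s−k}(g)
                        + e^φ·(L_s − 𝓛_s)(g),
where 𝓛_s(g) := h_s·g + D_s(g).
-/

noncomputable section

abbrev A : Type := MvPolynomial ℕ ℂ
abbrev B (r : ℕ) : Type := MvPowerSeries (Fin r) A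

/-- `a_p := p ∂/∂x_p` on A (gives 0 at p = 0). -/
def aA (p : ℕ) (P : A) : A := ((p : ℂ)) • MvPolynomial.pderiv (p - 1) P

/-- Coefficientwise extension of `a_p` to B. -/
def aB (r : ℕ) (p : ℕ) (f : B r) : B r :=
  fun d => aA p (MvPowerSeries.coeff (R := A) d f)

/-- `L_s = (1/2)∑_{k=0}^{s} a_k a_{s−k} + ∑_{p≥1} a_{−p} a_{s+p} − ρ(s+1) a_s`
on A; the locally finite sum over p is a `finsum`. -/
def LA (ρ : ℂ) (s : ℕ) (P : A) : A :=
  (1 / 2 : ℂ) • (∑ k ∈ Finset.range (s + 1), aA k (aA (s - k) P))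
    + (∑ᶠ p : ℕ, if 1 ≤ p then MvPolynomial.X (p - 1) * aA (s + p) P else 0)
    - (ρ * ((s : ℂ) + 1)) • aA s P

/-- Coefficientwise extension of `L_s` to B. -/
def LB (r : ℕ) (ρ : ℂ) (s : ℕ) (f : B r) : B r :=
  fun d => LA ρ s (MvPowerSeries.coeff (R := A) d f)

/-- `λ_j` as an element of B: `λ_0 = 0`, `λ_j` is the j-th variable for
`1 ≤ j ≤ r`, and `λ_j = 0` for `j > r`. -/
def lamB (r : ℕ) (j : ℕ) : B r :=
  if h : 1 ≤ j ∧ j ≤ r then MvPowerSeries.X (⟨j - 1, by omega⟩ : Fin r) else 0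

/-- `h_s := (1/2)∑_{j=0}^{s} λ_j λ_{s−j} − ρ(s+1)λ_s`. -/
def hB (r : ℕ) (ρ : ℂ) (s : ℕ) : B r :=
  (1 / 2 : ℂ) • ∑ j ∈ Finset.range (s + 1), lamB r j * lamB r (s - j)
    - (ρ * ((s : ℂ) + 1)) • lamB r s

/-- `∂/∂λ_{n+1}` acting coefficientwise on B. -/
def dLam (r : ℕ) (n : Fin r) (f : B r) : B r :=
  fun d => ((d n + 1 : ℕ) : ℂ) • MvPowerSeries.coeff (R := A) (d + Finsupp.single n 1) f

/-- `D_s := ∑_{j=1}^{r−s} j λ_{j+s} ∂/∂λ_j` on B. -/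
def DB (r : ℕ) (s : ℕ) (f : B r) : B r :=
  ∑ j : Fin r,
    if h : (j : ℕ) + 1 + s ≤ r then
      (((j : ℕ) + 1 : ℕ) : ℂ) •
        (MvPowerSeries.X (⟨(j : ℕ) + s, by omega⟩ : Fin r) * dLam r j f)
    else 0

/-- `φ := ∑_{j=1}^r λ_j x_j / j`. -/
def phi (r : ℕ) : B r :=
  ∑ j : Fin r,
    MvPowerSeries.C (σ := Fin r) (R := A)
        (MvPolynomial.C (1 / (((j : ℕ) : ℂ) + 1)) * MvPolynomial.X (j : ℕ))
      * MvPowerSeries.X j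

/-- The exponential `∑_{m≥0} f^m/m!` of a series of positive λ-order. -/
def expB (r : ℕ) (f : B r) : B r :=
  fun d => ∑ m ∈ Finset.range (d.sum (fun _ k => k) + 1),
    ((m.factorial : ℂ))⁻¹ • MvPowerSeries.coeff (R := A) d (f ^ m)


/-!
The operators `a_p`, the first-order part `∑_{p ≥ 1} x_p a_{s+p}` of `L_s` and the `∂/∂λ_j` are
derivations of `B`. A derivation `δ` that reads coefficients only boundedly many λ-degrees up
satisfies `δ(e^φ) = δ(φ) e^φ`, since near any given coefficient `e^φ` may be replaced by a partial
sum of the exponential series. As `a_q φ = λ_q` and `∂φ/∂λ_j = x_j / j`, expanding the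
second-order operator `L_s` gives
`L_s(e^φ g) = (h_s + T) e^φ g + ∑_k λ_k e^φ a_{s-k} g + e^φ L_s g` with `T = ∑_{p=1}^r x_p λ_{s+p}`,
while `D_s(e^φ g) = T e^φ g + e^φ D_s g`; so `T` cancels in `L_s − 𝓛_s`.
-/

open MvPowerSeries Finset

namespace Derivation

variable {σ R A : Type*} [CommRing R] [CommRing A] [Algebra R A]

def coeffwise (D : Derivation R A A) :
    Derivation R (MvPowerSeries σ A) (MvPowerSeries σ A) :=
  Derivation.mk'
    { toFun := fun f => (fun d => D (coeff d f) : MvPowerSeries σ A)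
      map_add' := fun f g => funext fun d => D.map_add (coeff d f) (coeff d g)
      map_smul' := fun c f => funext fun d => D.map_smul c (coeff d f) }
    fun f g => by
      classical
      ext d
      simp only [smul_eq_mul, map_add]
      rw [mul_comm g, coeff_mul, coeff_mul, ← sum_add_distrib]
      show D (coeff d (f * g)) = _
      rw [coeff_mul, map_sum]
      refine sum_congr rfl fun p _ => ?_
      rw [leibniz, smul_eq_mul, smul_eq_mul, mul_comm (coeff p.2 g)]
      rfl

theorem coeff_coeffwise (D : Derivation R A A) (f : MvPowerSeries σ A) (d : σ →₀ ℕ) :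
    coeff d (D.coeffwise f) = D (coeff d f) := rfl

theorem coeffwise_C (D : Derivation R A A) (a : A) :
    D.coeffwise (C (σ := σ) a) = C (D a) := by
  classical
  ext d
  rw [coeff_coeffwise, coeff_C, coeff_C]
  split_ifs <;> simp

theorem coeffwise_X (D : Derivation R A A) (i : σ) : D.coeffwise (X (R := A) i) = 0 := by
  classical
  ext d
  rw [coeff_coeffwise, coeff_X]
  split_ifs <;> simp

theorem coeffwise_C_mul_X (D : Derivation R A A) (a : A) (i : σ) :
    D.coeffwise (C a * X i) = C (D a) * X i := by
  rw [leibniz, coeffwise_X, coeffwise_C, smul_zero, zero_add, smul_eq_mul, mul_comm]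

end Derivation

theorem MvPowerSeries.coeff_mul_eq_of_coeff_eq {σ R : Type*} [CommSemiring R] {d : σ →₀ ℕ}
    (f : MvPowerSeries σ R) {g₁ g₂ : MvPowerSeries σ R} (h : ∀ e ≤ d, coeff e g₁ = coeff e g₂) :
    coeff d (f * g₁) = coeff d (f * g₂) := by
  classical
  rw [coeff_mul, coeff_mul]
  refine sum_congr rfl fun p hp => ?_
  rw [h p.2 (mem_antidiagonal.1 hp ▸ le_add_self)]

section Exponential

variable {r : ℕ}

def expPartialSum (n : ℕ) (f : B r) : B r :=
  ∑ m ∈ range (n + 1), ((m.factorial : ℂ))⁻¹ • f ^ m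

theorem coeff_expB_eq_coeff_expPartialSum {f : B r} (hf : constantCoeff f = 0)
    {d : Fin r →₀ ℕ} {n : ℕ} (hd : d.degree ≤ n) :
    coeff d (expB r f) = coeff d (expPartialSum n f) := by
  have hvanish : ∀ m ∈ range (n + 1), m ∉ range (d.degree + 1) →
      ((m.factorial : ℂ))⁻¹ • coeff d (f ^ m) = 0 := by
    intro m _ hm
    rw [mem_range, not_lt, Nat.succ_le_iff] at hm
    rw [coeff_of_lt_order ((Nat.cast_lt.2 hm).trans_le
      (le_order_pow_of_constantCoeff_eq_zero m hf)), smul_zero]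
  rw [expPartialSum, map_sum]
  exact sum_subset (range_subset_range.2 (Nat.succ_le_succ hd)) hvanish

theorem Derivation.map_expPartialSum_succ (δ : Derivation ℂ (B r) (B r)) (f : B r) (n : ℕ) :
    δ (expPartialSum (n + 1) f) = δ f * expPartialSum n f := by
  rw [expPartialSum, expPartialSum, sum_range_succ', map_add, pow_zero, map_smul,
    δ.map_one_eq_zero, smul_zero, add_zero, map_sum, mul_sum]
  refine sum_congr rfl fun m _ => ?_
  rw [map_smul, δ.leibniz_pow, Nat.add_sub_cancel, ← Nat.cast_smul_eq_nsmul ℂ, smul_smul,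
    smul_eq_mul, mul_smul_comm, mul_comm (f ^ m)]
  congr 1
  rw [Nat.factorial_succ, Nat.cast_mul, mul_inv, mul_right_comm,
    inv_mul_cancel₀ (Nat.cast_ne_zero.2 m.succ_ne_zero), one_mul]

theorem Derivation.map_expB (δ : Derivation ℂ (B r) (B r)) (k : ℕ)
    (hδ : ∀ d f, (∀ e : Fin r →₀ ℕ, e.degree ≤ d.degree + k → coeff e f = 0) →
      coeff d (δ f) = 0)
    {f : B r} (hf : constantCoeff f = 0) :
    δ (expB r f) = δ f * expB r f := by
  refine MvPowerSeries.ext fun d => ?_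
  set n := d.degree + k
  have hδexp : coeff d (δ (expB r f)) = coeff d (δ (expPartialSum (n + 1) f)) := by
    rw [← sub_eq_zero, ← map_sub, ← map_sub]
    refine hδ d _ fun e he => ?_
    rw [map_sub, sub_eq_zero]
    exact coeff_expB_eq_coeff_expPartialSum hf (by omega)
  rw [hδexp, δ.map_expPartialSum_succ]
  refine coeff_mul_eq_of_coeff_eq (δ f) fun e he => ?_
  exact (coeff_expB_eq_coeff_expPartialSum hf ((Finsupp.degree_mono he).trans (by omega))).symm

end Exponential

section Operators

variable {r : ℕ}

def aDeriv (p : ℕ) : Derivation ℂ A A := (p : ℂ) • MvPolynomial.pderiv (p - 1)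

theorem aDeriv_apply (p : ℕ) (P : A) : aDeriv p P = aA p P := rfl

theorem aB_eq_coeffwise (p : ℕ) (f : B r) : aB r p f = (aDeriv p).coeffwise f := rfl

theorem aB_add (p : ℕ) (f g : B r) : aB r p (f + g) = aB r p f + aB r p g := by
  simp only [aB_eq_coeffwise, map_add]

theorem aB_mul (p : ℕ) (f g : B r) : aB r p (f * g) = aB r p f * g + f * aB r p g := by
  simp only [aB_eq_coeffwise, Derivation.leibniz, smul_eq_mul]
  ring

theorem aDeriv_C_mul_X (p j : ℕ) :
    aDeriv p (MvPolynomial.C (1 / ((j : ℂ) + 1)) * MvPolynomial.X j) =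
      if p = j + 1 then 1 else 0 := by
  classical
  rw [aDeriv, Derivation.smul_apply, MvPolynomial.pderiv_C_mul, MvPolynomial.pderiv_X]
  by_cases hp : p = j + 1
  · subst hp
    rw [if_pos rfl, Nat.add_sub_cancel, Pi.single_eq_same, mul_one, MvPolynomial.smul_eq_C_mul,
      ← MvPolynomial.C_mul, Nat.cast_succ, mul_one_div_cancel (Nat.cast_add_one_ne_zero j),
      MvPolynomial.C_1]
  · rw [if_neg hp]
    rcases Nat.eq_zero_or_pos p with rfl | hpos
    · rw [Nat.cast_zero, zero_smul]
    · rw [Pi.single_eq_of_ne (by omega), mul_zero, smul_zero]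

theorem constantCoeff_phi : constantCoeff (phi r) = 0 := by
  simp [phi]

theorem aB_phi (q : ℕ) : aB r q (phi r) = lamB r q := by
  classical
  rw [aB_eq_coeffwise, phi, map_sum]
  simp only [Derivation.coeffwise_C_mul_X, aDeriv_C_mul_X, apply_ite C, map_one, map_zero,
    ite_mul, one_mul, zero_mul]
  rw [lamB]
  split_ifs with hq
  · have hiff : ∀ x : Fin r, q = (x : ℕ) + 1 ↔ (⟨q - 1, by omega⟩ : Fin r) = x := fun x => by
      rw [Fin.ext_iff]; dsimp only; omega
    simp only [hiff, sum_ite_eq, mem_univ, if_true]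
  · exact sum_eq_zero fun x _ => if_neg (by omega)

theorem lamB_eq_zero_of_lt {q : ℕ} (h : r < q) : lamB r q = 0 := by
  rw [lamB, dif_neg (by omega)]

theorem aB_lamB (p q : ℕ) : aB r p (lamB r q) = 0 := by
  rw [aB_eq_coeffwise, lamB]
  split_ifs
  · exact Derivation.coeffwise_X _ _
  · exact map_zero _

theorem aB_lamB_mul (p q : ℕ) (f : B r) : aB r p (lamB r q * f) = lamB r q * aB r p f := by
  rw [aB_mul, aB_lamB, zero_mul, zero_add]

theorem aB_expB (q : ℕ) : aB r q (expB r (phi r)) = lamB r q * expB r (phi r) := by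
  rw [aB_eq_coeffwise, Derivation.map_expB _ 0 (fun d f hf => by
    rw [Derivation.coeff_coeffwise, hf d le_rfl, map_zero]) constantCoeff_phi,
    ← aB_eq_coeffwise, aB_phi]

theorem aB_expB_mul (q : ℕ) (f : B r) :
    aB r q (expB r (phi r) * f) = lamB r q * (expB r (phi r) * f) + expB r (phi r) * aB r q f := by
  rw [aB_mul, aB_expB, mul_assoc]

theorem dLam_eq_pderiv (n : Fin r) (f : B r) : dLam r n f = pderiv A n f := by
  refine MvPowerSeries.ext fun d => ?_
  rw [coeff_pderiv]
  change ((d n + 1 : ℕ) : ℂ) • coeff _ f = _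
  rw [Nat.cast_smul_eq_nsmul, nsmul_eq_mul', Nat.cast_succ]

theorem dLam_mul (n : Fin r) (f g : B r) :
    dLam r n (f * g) = dLam r n f * g + f * dLam r n g := by
  simp only [dLam_eq_pderiv, Derivation.leibniz, smul_eq_mul]
  ring

theorem pderiv_phi (n : Fin r) :
    pderiv A n (phi r) = C (MvPolynomial.C (1 / (((n : ℕ) : ℂ) + 1)) * MvPolynomial.X (n : ℕ)) := by
  classical
  simp only [phi, map_sum, Derivation.leibniz, pderiv_X, pderiv_C, add_zero,
    smul_eq_mul, Pi.single_apply, mul_ite, mul_one, mul_zero, sum_ite_eq', mem_univ, if_true]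

theorem dLam_expB (n : Fin r) :
    dLam r n (expB r (phi r)) =
      C (MvPolynomial.C (1 / (((n : ℕ) : ℂ) + 1)) * MvPolynomial.X (n : ℕ)) * expB r (phi r) := by
  rw [dLam_eq_pderiv, ← pderiv_phi]
  refine ((pderiv A n).restrictScalars ℂ).map_expB 1 (fun d f hf => ?_) constantCoeff_phi
  rw [Derivation.coe_restrictScalars, coeff_pderiv,
    hf _ (by rw [map_add, Finsupp.degree_single]), zero_mul]

end Operators

section Raising

variable {r : ℕ}

theorem aA_eq_zero_of_notMem_vars {p : ℕ} {P : A} (h : p - 1 ∉ P.vars) : aA p P = 0 := by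
  rw [aA, MvPolynomial.pderiv_eq_zero_of_notMem_vars h, smul_zero]

def raiseTerm (s : ℕ) (P : A) (p : ℕ) : A :=
  if 1 ≤ p then MvPolynomial.X (p - 1) * aA (s + p) P else 0

theorem hasFiniteSupport_raiseTerm (s : ℕ) (P : A) :
    Function.HasFiniteSupport (raiseTerm s P) := by
  refine (Set.finite_Iic (P.vars.sup id + 1)).subset fun p hp => ?_
  by_contra hle
  rw [Set.mem_Iic, not_le] at hle
  refine hp ?_
  rw [raiseTerm, if_pos (by omega), aA_eq_zero_of_notMem_vars, mul_zero]
  intro hmem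
  have : s + p - 1 ≤ P.vars.sup id := le_sup (f := id) hmem
  omega

theorem raiseTerm_add (s : ℕ) (P Q : A) (p : ℕ) :
    raiseTerm s (P + Q) p = raiseTerm s P p + raiseTerm s Q p := by
  simp only [raiseTerm, ← aDeriv_apply, map_add, mul_add]
  split_ifs <;> simp

theorem raiseTerm_smul (s : ℕ) (c : ℂ) (P : A) (p : ℕ) :
    raiseTerm s (c • P) p = c • raiseTerm s P p := by
  rw [raiseTerm, raiseTerm]
  split_ifs
  · rw [← aDeriv_apply, Derivation.map_smul, mul_smul_comm, aDeriv_apply]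
  · rw [smul_zero]

theorem raiseTerm_mul (s : ℕ) (P Q : A) (p : ℕ) :
    raiseTerm s (P * Q) p = P * raiseTerm s Q p + Q * raiseTerm s P p := by
  simp only [raiseTerm, ← aDeriv_apply, Derivation.leibniz, smul_eq_mul]
  split_ifs <;> ring

def raiseDeriv (s : ℕ) : Derivation ℂ A A :=
  Derivation.mk'
    { toFun := fun P => ∑ᶠ p, raiseTerm s P p
      map_add' := fun P Q => by
        simp only [raiseTerm_add]
        exact finsum_add_distrib (hasFiniteSupport_raiseTerm s P) (hasFiniteSupport_raiseTerm s Q)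
      map_smul' := fun c P => by
        simp only [raiseTerm_smul, RingHom.id_apply, smul_finsum] }
    fun P Q => by
      simp only [LinearMap.coe_mk, AddHom.coe_mk, raiseTerm_mul, smul_eq_mul, mul_finsum]
      exact finsum_add_distrib ((hasFiniteSupport_raiseTerm s Q).mul_right _)
        ((hasFiniteSupport_raiseTerm s P).mul_right _)

theorem raiseDeriv_eq_sum {s N : ℕ} {P : A} (hP : ∀ p, N < p → aA (s + p) P = 0) :
    raiseDeriv s P = ∑ i ∈ range N, MvPolynomial.X i * aA (s + i + 1) P := by
  change ∑ᶠ p, raiseTerm s P p = _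
  rw [finsum_eq_sum_of_support_subset _ (s := (range N).map ⟨(· + 1), add_left_injective 1⟩),
    sum_map]
  · rfl
  · intro p hp
    rw [Function.mem_support, raiseTerm] at hp
    split_ifs at hp with hp1
    · refine mem_map.2 ⟨p - 1, mem_range.2 ?_, by simp; omega⟩
      by_contra hN
      exact hp (by rw [hP p (by omega), mul_zero])
    · exact absurd rfl hp

theorem LB_eq (ρ : ℂ) (s : ℕ) (f : B r) :
    LB r ρ s f = (1 / 2 : ℂ) • ∑ k ∈ range (s + 1), aB r k (aB r (s - k) f)
      + (raiseDeriv s).coeffwise f - (ρ * ((s : ℂ) + 1)) • aB r s f := by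
  refine MvPowerSeries.ext fun d => ?_
  simp only [map_sub, map_add, LinearMap.map_smul_of_tower, map_sum]
  rfl

end Raising

def crossTerm (r s : ℕ) : B r :=
  ∑ i ∈ range r, C (MvPolynomial.X i) * lamB r (s + i + 1)

section Commutation

variable {r : ℕ}

local notation "E" => expB r (phi r)

theorem raiseDeriv_coeffwise_expB (s : ℕ) :
    (raiseDeriv s).coeffwise E = crossTerm r s * E := by
  refine MvPowerSeries.ext fun d => ?_
  have hvanish : ∀ p, r < p → aA (s + p) (coeff d E) = 0 := fun p hp => by
    change coeff d (aB r (s + p) E) = 0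
    rw [aB_expB, lamB_eq_zero_of_lt (by omega), zero_mul, map_zero]
  rw [Derivation.coeff_coeffwise, raiseDeriv_eq_sum hvanish, crossTerm, sum_mul, map_sum]
  refine sum_congr rfl fun i _ => ?_
  rw [mul_assoc, coeff_C_mul, ← aB_expB]
  rfl

theorem raiseDeriv_coeffwise_expB_mul (s : ℕ) (f : B r) :
    (raiseDeriv s).coeffwise (E * f) =
      crossTerm r s * (E * f) + E * (raiseDeriv s).coeffwise f := by
  rw [Derivation.leibniz, raiseDeriv_coeffwise_expB, smul_eq_mul, smul_eq_mul]
  ring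

theorem sum_aB_aB_expB_mul (s : ℕ) (g : B r) :
    ∑ k ∈ range (s + 1), aB r k (aB r (s - k) (E * g)) =
      (∑ k ∈ range (s + 1), lamB r k * lamB r (s - k)) * (E * g)
        + 2 • ∑ k ∈ range (s + 1), lamB r k * (E * aB r (s - k) g)
        + E * ∑ k ∈ range (s + 1), aB r k (aB r (s - k) g) := by
  have hreflect : ∑ k ∈ range (s + 1), lamB r (s - k) * (E * aB r k g) =
      ∑ k ∈ range (s + 1), lamB r k * (E * aB r (s - k) g) := by
    rw [← sum_range_reflect]
    refine sum_congr rfl fun k hk => ?_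
    rw [mem_range] at hk
    rw [show s + 1 - 1 - k = s - k by omega, show s - (s - k) = k by omega]
  have hterm : ∀ k ∈ range (s + 1), aB r k (aB r (s - k) (E * g)) =
      lamB r k * lamB r (s - k) * (E * g)
        + (lamB r (s - k) * (E * aB r k g) + lamB r k * (E * aB r (s - k) g))
        + E * aB r k (aB r (s - k) g) := fun k _ => by
    rw [aB_expB_mul, aB_add, aB_lamB_mul, aB_expB_mul, aB_expB_mul]
    ring
  rw [sum_congr rfl hterm, sum_add_distrib, sum_add_distrib, sum_add_distrib, hreflect, two_smul,
    sum_mul, mul_sum]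

theorem LB_expB_mul (ρ : ℂ) (s : ℕ) (g : B r) :
    LB r ρ s (E * g) = (hB r ρ s + crossTerm r s) * (E * g)
      + ∑ k ∈ range (s + 1), lamB r k * (E * aB r (s - k) g) + E * LB r ρ s g := by
  rw [LB_eq, LB_eq, sum_aB_aB_expB_mul, raiseDeriv_coeffwise_expB_mul, aB_expB_mul, hB]
  simp only [add_mul, sub_mul, mul_add, mul_sub, smul_mul_assoc, mul_smul_comm]
  module

theorem DB_eq_sum (s : ℕ) (f : B r) :
    DB r s f = ∑ j : Fin r, (((j : ℕ) + 1 : ℕ) : ℂ) • (lamB r (s + j + 1) * dLam r j f) := by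
  refine sum_congr rfl fun j _ => ?_
  split_ifs with h
  · rw [lamB, dif_pos (by omega)]
    congr 3
    ext
    dsimp only
    omega
  · rw [lamB, dif_neg (by omega), zero_mul, smul_zero]

theorem natCast_smul_C_div_mul_X (j : ℕ) :
    (((j + 1 : ℕ) : ℂ)) • C (MvPolynomial.C (1 / ((j : ℂ) + 1)) * MvPolynomial.X j) =
      (C (MvPolynomial.X j) : B r) := by
  rw [Algebra.smul_def, MvPowerSeries.algebraMap_apply, MvPolynomial.algebraMap_eq, ← map_mul,
    ← mul_assoc, ← MvPolynomial.C_mul, Nat.cast_succ,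
    mul_one_div_cancel (Nat.cast_add_one_ne_zero j), MvPolynomial.C_1, one_mul]

theorem DB_expB_mul (s : ℕ) (f : B r) :
    DB r s (E * f) = crossTerm r s * (E * f) + E * DB r s f := by
  rw [DB_eq_sum, DB_eq_sum, crossTerm, ← Fin.sum_univ_eq_sum_range, sum_mul, mul_sum,
    ← sum_add_distrib]
  refine sum_congr rfl fun j _ => ?_
  rw [dLam_mul, dLam_expB, ← natCast_smul_C_div_mul_X]
  simp only [Algebra.smul_def]
  ring

end Commutation

theorem statement11_general (r : ℕ) (ρ : ℂ) (s : ℕ) (g : B r) :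
    LB r ρ s (expB r (phi r) * g)
        - (hB r ρ s * (expB r (phi r) * g) + DB r s (expB r (phi r) * g))
      = hB r ρ s * (expB r (phi r) * g)
        + (∑ k ∈ Finset.range (s + 1), lamB r k * (expB r (phi r) * aB r (s - k) g))
        + expB r (phi r) * (LB r ρ s g - (hB r ρ s * g + DB r s g)) := by
  rw [LB_expB_mul, DB_expB_mul]
  ring

theorem statement11 (r : ℕ) (hr : 1 ≤ r) (ρ : ℂ) (s : ℕ) (g : B r) :
    LB r ρ s (expB r (phi r) * g)
        - (hB r ρ s * (expB r (phi r) * g) + DB r s (expB r (phi r) * g))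
      = hB r ρ s * (expB r (phi r) * g)
        + (∑ k ∈ Finset.range (s + 1), lamB r k * (expB r (phi r) * aB r (s - k) g))
        + expB r (phi r) * (LB r ρ s g - (hB r ρ s * g + DB r s g)) :=
  statement11_general r ρ s g

end
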